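/- Square-root convergence rate for bounded-variation payoffs: if μᵇ ≼c μᵃ, the mid-marginal μᵐ = (μᵇ+μᵃ)/2 admits a density bounded by M > 0, and h : ℝ₊ → ℝ is upper semicontinuous with linear growth and bounded variation V(h) < ∞, then 0 ≤ P(h) − μᵐ(h) ≤ √(2M) · V(h) · √(d(μᵇ,μᵃ)), where P(h) = sup_{μᵇ ≼c μ ≼c μᵃ} μ(h). -/

import Mathlib

/-!
For an admissible `μ` (`μᵇ ≼c μ ≼c μᵃ`), the call prices `c_μ` and `c_m` of `μ` and of the
mid-marginal both lie between `c_b` and `c_a`; testing the straddle `|x - K|` in the bid–ask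
distance gives `c_a - c_b ≤ d`, hence `|c_μ - c_m| ≤ d / 2`. The survival functions
`s ↦ μ [s, ∞)` are minus the derivatives of the call prices, and that of `μᵐ` is `M`-Lipschitz,
so a gap `ε` between them at a point persists, up to a ramp of slope `M`, over an interval of
length `ε / M`; this forces `ε² / 2M ≤ d`. The same bound `√(2Md)` follows for the masses of all
upper sets. Writing `h` as `h 0` plus a difference of two monotone functions whose ranges have
total length at most `V(h)`, the layer-cake formula turns it into `μ(h) - μᵐ(h) ≤ V(h) √(2Md)`.
Taking the supremum over `μ`, and using that `μᵐ` is itself admissible, gives both bounds.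
-/

open MeasureTheory Set Filter Topology
open scoped NNReal ENNReal

noncomputable section

/-- Linear growth on the nonnegative half-line. -/
def LinGrowth (f : ℝ → ℝ) : Prop := ∃ C : ℝ, ∀ x ≥ (0:ℝ), |f x| ≤ C * (1 + x)

/-- A probability measure on ℝ supported on ℝ₊ with finite first moment. -/
def IsP1 (μ : Measure ℝ) : Prop :=
  IsProbabilityMeasure μ ∧ (∀ᵐ x ∂μ, 0 ≤ x) ∧ Integrable id μ

/-- Convex order: integrals of convex linear-growth test functions are ordered. -/
def CvxOrder (μ ν : Measure ℝ) : Prop :=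
  ∀ ψ : ℝ → ℝ, ConvexOn ℝ (Ici (0:ℝ)) ψ → LinGrowth ψ →
    ∫ x, ψ x ∂μ ≤ ∫ x, ψ x ∂ν

/-- The directed bid–ask distance. -/
def dirDist (μ ν : Measure ℝ) : ℝ :=
  sSup {r : ℝ | ∃ ψ : ℝ → ℝ, ConvexOn ℝ (Ici (0:ℝ)) ψ ∧
    LipschitzOnWith 1 ψ (Ici (0:ℝ)) ∧ r = ∫ x, ψ x ∂μ - ∫ x, ψ x ∂ν}

/-- The (symmetrized) bid–ask distance. -/
def baDist (μ ν : Measure ℝ) : ℝ := (dirDist μ ν + dirDist ν μ) / 2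

/-- Primal BAMOT value for a single maturity. -/
def Pval (μb μa : Measure ℝ) (h : ℝ → ℝ) : ℝ :=
  sSup {r : ℝ | ∃ μ : Measure ℝ, IsP1 μ ∧ CvxOrder μb μ ∧ CvxOrder μ μa ∧
    r = ∫ x, h x ∂μ}

section midMeasure

variable {α : Type*} [MeasurableSpace α]

def midMeasure (μ ν : Measure α) : Measure α := (2:ℝ≥0)⁻¹ • μ + (2:ℝ≥0)⁻¹ • ν

variable {μ ν : Measure α} {f : α → ℝ}

theorem Integrable.midMeasure (hμ : Integrable f μ) (hν : Integrable f ν) :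
    Integrable f (midMeasure μ ν) :=
  hμ.smul_measure_nnreal.add_measure hν.smul_measure_nnreal

theorem integral_midMeasure (hμ : Integrable f μ) (hν : Integrable f ν) :
    ∫ x, f x ∂(midMeasure μ ν) = (∫ x, f x ∂μ + ∫ x, f x ∂ν) / 2 := by
  rw [midMeasure, integral_add_measure hμ.smul_measure_nnreal hν.smul_measure_nnreal,
    integral_smul_nnreal_measure, integral_smul_nnreal_measure]
  simp only [NNReal.smul_def, NNReal.coe_inv, NNReal.coe_ofNat, smul_eq_mul]
  ring

instance [IsProbabilityMeasure μ] [IsProbabilityMeasure ν] :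
    IsProbabilityMeasure (midMeasure μ ν) := by
  constructor
  simp [midMeasure, ENNReal.smul_def, ENNReal.inv_two_add_inv_two]

end midMeasure

variable {μ ν : Measure ℝ}

theorem LinGrowth.of_lipschitzOnWith {ψ : ℝ → ℝ} {K : ℝ≥0}
    (hψ : LipschitzOnWith K ψ (Ici 0)) : LinGrowth ψ := by
  refine ⟨|ψ 0| + K, fun x hx => ?_⟩
  have hdist : |ψ x - ψ 0| ≤ K * x := by
    simpa [Real.dist_eq, abs_of_nonneg hx] using hψ.dist_le_mul x hx 0 self_mem_Ici
  have hK : (0 : ℝ) ≤ K := K.2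
  nlinarith [abs_sub_abs_le_abs_sub (ψ x) (ψ 0), abs_nonneg (ψ 0)]

theorem aestronglyMeasurable_of_convexOn_Ici {ψ : ℝ → ℝ} (hψ : ConvexOn ℝ (Ici 0) ψ)
    (hμ : ∀ᵐ x ∂μ, 0 ≤ x) : AEStronglyMeasurable ψ μ := by
  -- a convex function is continuous on the interior `Ioi 0`; the point `0` is handled alone
  have hIoi : AEStronglyMeasurable ψ (μ.restrict (Ioi 0)) := by
    refine ContinuousOn.aestronglyMeasurable ?_ measurableSet_Ioi
    simpa using hψ.continuousOn_interior
  have hzero : AEStronglyMeasurable ψ (μ.restrict {0}) :=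
    aestronglyMeasurable_const.congr <| by
      filter_upwards [ae_restrict_mem (measurableSet_singleton (0:ℝ))] with x hx
      rw [mem_singleton_iff.1 hx]
  have hμ' : ∀ᵐ x ∂μ, x ∈ Ici (0:ℝ) := hμ
  rw [← Measure.restrict_eq_self_of_ae_mem hμ', ← Ioi_insert, insert_eq]
  exact aestronglyMeasurable_union_iff.2 ⟨hzero, hIoi⟩

theorem IsP1.integrable_of_convexOn (hμ : IsP1 μ) {ψ : ℝ → ℝ} (hψ : ConvexOn ℝ (Ici 0) ψ)
    (hg : LinGrowth ψ) : Integrable ψ μ := by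
  obtain ⟨hprob, hpos, hid⟩ := hμ
  obtain ⟨C, hC⟩ := hg
  refine ((integrable_const |C|).add (hid.const_mul |C|)).mono'
    (aestronglyMeasurable_of_convexOn_Ici hψ hpos) ?_
  filter_upwards [hpos] with x hx
  calc ‖ψ x‖ ≤ C * (1 + x) := hC x hx
    _ ≤ |C| * (1 + x) := by gcongr; exact le_abs_self C
    _ = |C| + |C| * id x := by simp [mul_add]

theorem isP1_midMeasure (hμ : IsP1 μ) (hν : IsP1 ν) : IsP1 (midMeasure μ ν) := by
  have := hμ.1; have := hν.1
  refine ⟨inferInstance, ?_, Integrable.midMeasure hμ.2.2 hν.2.2⟩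
  rw [midMeasure, ae_add_measure_iff]
  exact ⟨Measure.ae_smul_measure hμ.2.1 _, Measure.ae_smul_measure hν.2.1 _⟩

theorem CvxOrder.integral_id_eq (hord : CvxOrder μ ν) : ∫ x, x ∂μ = ∫ x, x ∂ν := by
  have hle := hord (fun x => x) (convexOn_id (convex_Ici 0))
    ⟨1, fun x hx => by rw [abs_of_nonneg hx]; linarith⟩
  have hge := hord (fun x => -x) (concaveOn_id (convex_Ici 0)).neg
    ⟨1, fun x hx => by rw [abs_neg, abs_of_nonneg hx]; linarith⟩
  rw [integral_neg, integral_neg, neg_le_neg_iff] at hge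
  exact le_antisymm hle hge

theorem cvxOrder_midMeasure_left (hμ : IsP1 μ) (hν : IsP1 ν) (hord : CvxOrder μ ν) :
    CvxOrder μ (midMeasure μ ν) := fun ψ hψ hg => by
  rw [integral_midMeasure (hμ.integrable_of_convexOn hψ hg) (hν.integrable_of_convexOn hψ hg)]
  linarith [hord ψ hψ hg]

theorem cvxOrder_midMeasure_right (hμ : IsP1 μ) (hν : IsP1 ν) (hord : CvxOrder μ ν) :
    CvxOrder (midMeasure μ ν) ν := fun ψ hψ hg => by
  rw [integral_midMeasure (hμ.integrable_of_convexOn hψ hg) (hν.integrable_of_convexOn hψ hg)]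
  linarith [hord ψ hψ hg]

theorem IsP1.abs_integral_sub_apply_zero_le (hμ : IsP1 μ) {ψ : ℝ → ℝ}
    (hψ : ConvexOn ℝ (Ici 0) ψ) (hL : LipschitzOnWith 1 ψ (Ici 0)) :
    |∫ x, ψ x ∂μ - ψ 0| ≤ ∫ x, x ∂μ := by
  have := hμ.1
  have hint := hμ.integrable_of_convexOn hψ (.of_lipschitzOnWith hL)
  have hcenter : ∫ x, ψ x ∂μ - ψ 0 = ∫ x, (ψ x - ψ 0) ∂μ := by
    simp [integral_sub hint (integrable_const _)]
  rw [hcenter]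
  refine abs_integral_le_integral_abs.trans
    (integral_mono_ae (hint.sub (integrable_const _)).abs hμ.2.2 ?_)
  filter_upwards [hμ.2.1] with x hx
  simpa [Real.dist_eq, abs_of_nonneg hx] using hL.dist_le_mul x hx 0 self_mem_Ici

theorem le_dirDist (hμ : IsP1 μ) (hν : IsP1 ν) {ψ : ℝ → ℝ} (hψ : ConvexOn ℝ (Ici 0) ψ)
    (hL : LipschitzOnWith 1 ψ (Ici 0)) : ∫ x, ψ x ∂μ - ∫ x, ψ x ∂ν ≤ dirDist μ ν := by
  refine le_csSup ⟨∫ x, x ∂μ + ∫ x, x ∂ν, ?_⟩ ⟨ψ, hψ, hL, rfl⟩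
  rintro _ ⟨φ, hφ, hφL, rfl⟩
  linarith [abs_le.1 (hμ.abs_integral_sub_apply_zero_le hφ hφL),
    abs_le.1 (hν.abs_integral_sub_apply_zero_le hφ hφL)]

theorem dirDist_nonneg (hμ : IsP1 μ) (hν : IsP1 ν) : 0 ≤ dirDist μ ν := by
  simpa using le_dirDist hμ hν (convexOn_const 0 (convex_Ici 0))
    (LipschitzWith.const' 0).lipschitzOnWith

def callPrice (μ : Measure ℝ) (K : ℝ) : ℝ := ∫ x, max (x - K) 0 ∂μ

theorem convexOn_call (K : ℝ) : ConvexOn ℝ (Ici 0) fun x : ℝ => max (x - K) 0 :=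
  ((convexOn_id (convex_Ici 0)).sub (concaveOn_const K (convex_Ici 0))).sup
    (convexOn_const 0 (convex_Ici 0))

theorem lipschitzWith_call (K : ℝ) : LipschitzWith 1 fun x : ℝ => max (x - K) 0 :=
  (IsometryEquiv.subRight K).isometry.lipschitz.max_const 0

theorem IsP1.integrable_call (hμ : IsP1 μ) (K : ℝ) : Integrable (fun x => max (x - K) 0) μ :=
  hμ.integrable_of_convexOn (convexOn_call K)
    (.of_lipschitzOnWith (lipschitzWith_call K).lipschitzOnWith)

theorem CvxOrder.callPrice_le (hord : CvxOrder μ ν) (K : ℝ) : callPrice μ K ≤ callPrice ν K :=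
  hord _ (convexOn_call K) (.of_lipschitzOnWith (lipschitzWith_call K).lipschitzOnWith)

theorem IsP1.integral_dist_eq (hμ : IsP1 μ) (K : ℝ) :
    ∫ x, dist x K ∂μ = 2 * callPrice μ K - ∫ x, x ∂μ + K := by
  have := hμ.1
  have hpt : ∀ x : ℝ, dist x K = 2 * max (x - K) 0 - x + K := fun x => by
    rw [Real.dist_eq]; rcases le_total x K with hx | hx
    · rw [abs_of_nonpos (by linarith), max_eq_right (by linarith)]; ring
    · rw [abs_of_nonneg (by linarith), max_eq_left (by linarith)]; ring
  have hcall2 : Integrable (fun x => 2 * max (x - K) 0) μ := (hμ.integrable_call K).const_mul 2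
  have hid : Integrable (fun x : ℝ => x) μ := hμ.2.2
  have hdiff : Integrable (fun x => 2 * max (x - K) 0 - x) μ := hcall2.sub hid
  simp_rw [hpt]
  rw [integral_add hdiff (integrable_const K), integral_sub hcall2 hid,
    integral_const_mul, integral_const]
  simp [callPrice]

theorem callPrice_midMeasure (hμ : IsP1 μ) (hν : IsP1 ν) (K : ℝ) :
    callPrice (midMeasure μ ν) K = (callPrice μ K + callPrice ν K) / 2 :=
  integral_midMeasure (hμ.integrable_call K) (hν.integrable_call K)

theorem callPrice_sub_le_baDist (hμ : IsP1 μ) (hν : IsP1 ν) (hord : CvxOrder μ ν) (K : ℝ) :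
    callPrice ν K - callPrice μ K ≤ baDist μ ν := by
  -- the straddle `|x - K|` is worth `2 c(K) - mean + K`, and the means agree
  have hstraddle := le_dirDist hν hμ (convexOn_dist K (convex_Ici 0))
    (LipschitzWith.dist_left K).lipschitzOnWith
  rw [hν.integral_dist_eq, hμ.integral_dist_eq, hord.integral_id_eq] at hstraddle
  have := dirDist_nonneg hμ hν
  unfold baDist
  linarith

theorem abs_callPrice_sub_midMeasure_le {μb μa : Measure ℝ} (hb : IsP1 μb) (ha : IsP1 μa)
    (hord : CvxOrder μb μa) (hbμ : CvxOrder μb μ) (hμa : CvxOrder μ μa) (K : ℝ) :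
    |callPrice μ K - callPrice (midMeasure μb μa) K| ≤ baDist μb μa / 2 := by
  have hbμK := hbμ.callPrice_le K
  have hμaK := hμa.callPrice_le K
  have hgap := callPrice_sub_le_baDist hb ha hord K
  rw [callPrice_midMeasure hb ha, abs_le]
  constructor <;> linarith

section GradientEstimate

variable {a b : ℝ → ℝ} {M δ t x : ℝ}

theorem sub_le_sqrt_of_abs_intervalIntegral_le (hM : 0 < M) (ha : Antitone a) (hb : Antitone b)
    (hbM : ∀ s u, s ≤ u → b s - b u ≤ M * (u - s))
    (hδ : ∀ K L, K ≤ L → |∫ s in K..L, (a s - b s)| ≤ δ)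
    (hx : ∀ s, t < s → a s ≤ x) : b t - x ≤ √(2 * M * δ) := by
  set ε := b t - x
  rcases le_or_gt ε 0 with hε | hε
  · exact hε.trans (Real.sqrt_nonneg _)
  set r := ε / M
  have hr : 0 < r := div_pos hε hM
  have hMr : M * r = ε := mul_div_cancel₀ ε hM.ne'
  -- right of `t`, the gap `b - a` stays above the ramp `ε - M (s - t)`, of area `ε² / 2M`
  have hramp : ∫ s in t..t + r, (ε - M * (s - t)) ≤ ∫ s in t..t + r, (b s - a s) := by
    refine intervalIntegral.integral_mono_on_of_le_Ioo (by linarith)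
      ((by fun_prop : Continuous fun s => ε - M * (s - t)).intervalIntegrable _ _)
      (hb.intervalIntegrable.sub ha.intervalIntegrable) fun s hs => ?_
    linarith [hbM t s hs.1.le, hx s hs.1]
  have hramp_eq : ∫ s in t..t + r, (ε - M * (s - t)) = ε * r / 2 := by
    have hshift := intervalIntegral.integral_comp_sub_right (a := t) (b := t + r)
      (fun u => ε - M * u) t
    simp only [sub_self, add_sub_cancel_left] at hshift
    rw [hshift, intervalIntegral.integral_sub (f := fun _ => ε) (g := fun u => M * u)
      intervalIntegrable_const ((continuous_const.mul continuous_id).intervalIntegrable _ _),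
      intervalIntegral.integral_const, intervalIntegral.integral_const_mul, integral_id]
    simp only [smul_eq_mul]
    linear_combination (-(r / 2)) * hMr
  have hgap : ∫ s in t..t + r, (b s - a s) ≤ δ := by
    have := neg_le_abs (∫ s in t..t + r, (a s - b s))
    rw [← intervalIntegral.integral_neg] at this
    simp only [neg_sub] at this
    exact this.trans (hδ t (t + r) (by linarith))
  rw [Real.le_sqrt' hε]
  calc ε ^ 2 = M * (ε * r) := by rw [← hMr]; ring
    _ ≤ M * (2 * δ) := mul_le_mul_of_nonneg_left (by linarith [hramp_eq ▸ hramp]) hM.le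
    _ = 2 * M * δ := by ring

theorem abs_sub_le_sqrt_of_abs_intervalIntegral_le (hM : 0 < M) (ha : Antitone a)
    (hb : Antitone b) (hbM : ∀ s u, s ≤ u → b s - b u ≤ M * (u - s))
    (hδ : ∀ K L, K ≤ L → |∫ s in K..L, (a s - b s)| ≤ δ)
    (hx_right : ∀ s, t < s → a s ≤ x) (hx_left : ∀ s, s < t → x ≤ a s) :
    |x - b t| ≤ √(2 * M * δ) := by
  rw [abs_sub_comm, abs_le']
  refine ⟨sub_le_sqrt_of_abs_intervalIntegral_le hM ha hb hbM hδ hx_right, ?_⟩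
  -- the left-hand estimate is the right-hand one for the reflections `s ↦ -a (-s)`, `s ↦ -b (-s)`
  have hreflect := sub_le_sqrt_of_abs_intervalIntegral_le (a := fun s => -a (-s))
    (b := fun s => -b (-s)) (t := -t) (x := -x) hM
    (fun s u hsu => neg_le_neg (ha (neg_le_neg hsu)))
    (fun s u hsu => neg_le_neg (hb (neg_le_neg hsu)))
    (fun s u hsu => by linarith [hbM (-u) (-s) (neg_le_neg hsu)])
    (fun K L hKL => by
      have hflip : ∫ s in K..L, (-a (-s) - -b (-s)) = -∫ s in -L..-K, (a s - b s) := by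
        rw [← intervalIntegral.integral_comp_neg (fun s => a s - b s),
          ← intervalIntegral.integral_neg]
        ring_nf
      rw [hflip, abs_neg]
      exact hδ (-L) (-K) (neg_le_neg hKL))
    (fun s hs => neg_le_neg (hx_left (-s) (by linarith)))
  simp only [neg_neg] at hreflect
  linarith

end GradientEstimate

theorem IsP1.callPrice_sub_callPrice_eq_integral (hμ : IsP1 μ) {K L : ℝ} (hKL : K ≤ L) :
    callPrice μ K - callPrice μ L = ∫ s in K..L, μ.real (Ici s) := by
  have := hμ.1
  have hspread : Integrable (fun x => max (x - K) 0 - max (x - L) 0) μ :=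
    (hμ.integrable_call K).sub (hμ.integrable_call L)
  have hbounds : ∀ x : ℝ, 0 ≤ max (x - K) 0 - max (x - L) 0 ∧
      max (x - K) 0 - max (x - L) 0 ≤ L - K := fun x => by
    constructor <;>
    rcases max_cases (x - K) 0 with ⟨h1, _⟩ | ⟨h1, _⟩ <;>
    rcases max_cases (x - L) 0 with ⟨h2, _⟩ | ⟨h2, _⟩ <;> linarith
  have hlevel : ∀ t ∈ Ioc 0 (L - K),
      {x : ℝ | t ≤ max (x - K) 0 - max (x - L) 0} = Ici (K + t) := fun t ht => by
    ext x
    simp only [mem_ofPred_eq, mem_Ici]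
    obtain ⟨ht0, htL⟩ := ht
    constructor <;> intro hx <;>
    rcases max_cases (x - K) 0 with ⟨h1, _⟩ | ⟨h1, _⟩ <;>
    rcases max_cases (x - L) 0 with ⟨h2, _⟩ | ⟨h2, _⟩ <;> linarith
  rw [callPrice, callPrice, ← integral_sub (hμ.integrable_call K) (hμ.integrable_call L),
    hspread.integral_eq_integral_Ioc_meas_le (.of_forall fun x => (hbounds x).1)
      (.of_forall fun x => (hbounds x).2),
    setIntegral_congr_fun measurableSet_Ioc fun t ht => by rw [hlevel t ht],
    ← intervalIntegral.integral_of_le (by linarith),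
    intervalIntegral.integral_comp_add_left (fun s => μ.real (Ici s)) K]
  simp

theorem antitone_measureReal_Ici (μ : Measure ℝ) [IsFiniteMeasure μ] :
    Antitone fun s => μ.real (Ici s) :=
  fun _ _ hst => measureReal_mono (Ici_subset_Ici.2 hst)

theorem abs_intervalIntegral_measureReal_Ici_sub_le (hμ : IsP1 μ) (hν : IsP1 ν) {δ : ℝ}
    (hcall : ∀ K, |callPrice μ K - callPrice ν K| ≤ δ / 2) {K L : ℝ} (hKL : K ≤ L) :
    |∫ s in K..L, (μ.real (Ici s) - ν.real (Ici s))| ≤ δ := by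
  have := hμ.1; have := hν.1
  rw [intervalIntegral.integral_sub (antitone_measureReal_Ici μ).intervalIntegrable
    (antitone_measureReal_Ici ν).intervalIntegrable, ← hμ.callPrice_sub_callPrice_eq_integral hKL,
    ← hν.callPrice_sub_callPrice_eq_integral hKL]
  have hK := abs_le.1 (hcall K)
  have hL := abs_le.1 (hcall L)
  rw [abs_le]; constructor <;> linarith [hK.1, hK.2, hL.1, hL.2]

theorem IsUpperSet.Ioi_csInf_subset {α : Type*} [ConditionallyCompleteLinearOrder α]
    {S : Set α} (hS : IsUpperSet S) (hne : S.Nonempty) : Ioi (sInf S) ⊆ S := fun _ hy =>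
  let ⟨_, hz, hzy⟩ := exists_lt_of_csInf_lt hne hy
  hS hzy.le hz

theorem abs_measureReal_sub_le_of_isUpperSet (hμ : IsP1 μ) (hν : IsP1 ν) {M δ : ℝ} (hM : 0 < M)
    (hν_lip : ∀ s u, s ≤ u → ν.real (Icc s u) ≤ M * (u - s))
    (hcall : ∀ K, |callPrice μ K - callPrice ν K| ≤ δ / 2) {S : Set ℝ} (hS : IsUpperSet S) :
    |μ.real S - ν.real S| ≤ √(2 * M * δ) := by
  have := hμ.1; have := hν.1
  rcases S.eq_empty_or_nonempty with rfl | hne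
  · simp
  by_cases hbdd : BddBelow S
  swap
  · obtain rfl : S = univ := eq_univ_of_forall fun y =>
      let ⟨_, hz, hzy⟩ := not_bddBelow_iff.1 hbdd y
      hS hzy.le hz
    simp
  -- `μ S` lies between the one-sided limits at `t = inf S` of `s ↦ μ [s, ∞)`, which is all the
  -- gradient estimate needs; `ν` has no atoms, so `ν S = ν [t, ∞)`
  set t := sInf S
  have hIci : S ⊆ Ici t := fun _ hy => csInf_le hbdd hy
  have hIoi : Ioi t ⊆ S := hS.Ioi_csInf_subset hne
  have hb_lip : ∀ s u, s ≤ u → ν.real (Ici s) - ν.real (Ici u) ≤ M * (u - s) := fun s u hsu => by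
    rw [← measureReal_sdiff (Ici_subset_Ici.2 hsu) measurableSet_Ici, Ici_sdiff_Ici]
    exact (measureReal_mono Ico_subset_Icc_self).trans (hν_lip s u hsu)
  have hνt : ν.real S = ν.real (Ici t) := by
    have hatom : ν {t} = 0 := (measureReal_eq_zero_iff).1 <| le_antisymm
      (by simpa using hν_lip t t le_rfl) measureReal_nonneg
    refine le_antisymm (measureReal_mono hIci) ?_
    rw [← measureReal_congr (Ioi_ae_eq_Ici' hatom)]
    exact measureReal_mono hIoi
  rw [hνt]
  exact abs_sub_le_sqrt_of_abs_intervalIntegral_le hM (antitone_measureReal_Ici μ)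
    (antitone_measureReal_Ici ν) hb_lip
    (fun _ _ hKL => abs_intervalIntegral_measureReal_Ici_sub_le hμ hν hcall hKL)
    (fun s hs => measureReal_mono ((Ici_subset_Ioi.2 hs).trans hIoi))
    (fun s hs => measureReal_mono (hIci.trans (Ici_subset_Ici.2 hs.le)))

theorem measureReal_Icc_le_of_density_le {φ : ℝ → ℝ≥0∞} {M : ℝ} (hM : 0 ≤ M)
    (hφ : ∀ x, φ x ≤ ENNReal.ofReal M) {s u : ℝ} (hsu : s ≤ u) :
    (volume.withDensity φ).real (Icc s u) ≤ M * (u - s) := by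
  rw [measureReal_def, withDensity_apply _ measurableSet_Icc]
  refine ENNReal.toReal_le_of_le_ofReal (mul_nonneg hM (sub_nonneg.2 hsu)) ?_
  calc ∫⁻ x in Icc s u, φ x ≤ ∫⁻ _ in Icc s u, ENNReal.ofReal M := lintegral_mono hφ
    _ = ENNReal.ofReal (M * (u - s)) := by
      rw [setLIntegral_const, Real.volume_Icc, ← ENNReal.ofReal_mul hM]

theorem BoundedVariationOn.exists_monotone_decomposition {h : ℝ → ℝ} {a : ℝ}
    (hbv : BoundedVariationOn h (Ici a)) :
    ∃ P N : ℝ → ℝ, Monotone P ∧ Monotone N ∧ 0 ≤ P ∧ 0 ≤ N ∧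
      (∀ x y, P x + N y ≤ (eVariationOn h (Ici a)).toReal) ∧
      EqOn h (fun x => h a + P x - N x) (Ici a) := by
  have hpos := variationOnFromTo.add_self_monotoneOn hbv.locallyBoundedVariationOn self_mem_Ici
  have hneg := variationOnFromTo.sub_self_monotoneOn hbv.locallyBoundedVariationOn self_mem_Ici
  have hvV : ∀ x, a ≤ x → variationOnFromTo h (Ici a) a x ≤ (eVariationOn h (Ici a)).toReal :=
    fun x hx => by
      rw [variationOnFromTo.eq_of_le h (Ici a) hx]
      exact ENNReal.toReal_mono hbv (eVariationOn.mono h inter_subset_left)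
  set v := variationOnFromTo h (Ici a) a
  have hv0 : v a = 0 := variationOnFromTo.self h (Ici a) a
  -- positive and negative variations, extended to be constant left of `a`
  set P := fun x => (v (max x a) + h (max x a) - h a) / 2
  set N := fun x => (v (max x a) - h (max x a) + h a) / 2
  have hPmono : Monotone P := fun x y hxy => by
    have := hpos (le_max_right x a) (le_max_right y a) (max_le_max_right a hxy)
    simp only [Pi.add_apply] at this
    simp only [P]; linarith
  have hNmono : Monotone N := fun x y hxy => by
    have := hneg (le_max_right x a) (le_max_right y a) (max_le_max_right a hxy)
    simp only [Pi.sub_apply] at this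
    simp only [N]; linarith
  have hP : ∀ x, P (max x a) = P x := fun x => by simp [P]
  have hN : ∀ x, N (max x a) = N x := fun x => by simp [N]
  have hPa : P a = 0 := by simp [P, hv0]
  have hNa : N a = 0 := by simp [N, hv0]
  refine ⟨P, N, hPmono, hNmono, fun x => ?_, fun x => ?_, fun x y => ?_, fun x hx => ?_⟩
  · simpa [hPa, hP] using hPmono (le_max_right x a)
  · simpa [hNa, hN] using hNmono (le_max_right x a)
  · calc P x + N y ≤ P (max x y) + N (max x y) :=
          add_le_add (hPmono (le_max_left x y)) (hNmono (le_max_right x y))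
      _ = v (max (max x y) a) := by simp only [P, N]; ring
      _ ≤ _ := hvV _ (le_max_right _ a)
  · simp only [P, N, max_eq_left (mem_Ici.1 hx)]; ring

theorem integral_sub_integral_le_of_monotone {μ ν : Measure ℝ} [IsFiniteMeasure μ]
    [IsFiniteMeasure ν] {s₀ B : ℝ} (hS : ∀ S : Set ℝ, IsUpperSet S → μ.real S - ν.real S ≤ s₀)
    {g : ℝ → ℝ} (hg : Monotone g) (hg0 : 0 ≤ g) (hgB : ∀ x, g x ≤ B) :
    ∫ x, g x ∂μ - ∫ x, g x ∂ν ≤ B * s₀ := by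
  have hB : 0 ≤ B := (hg0 0).trans (hgB 0)
  have hint : ∀ κ : Measure ℝ, [IsFiniteMeasure κ] → Integrable g κ := fun κ _ =>
    .of_mem_Icc 0 B hg.measurable.aemeasurable (.of_forall fun x => ⟨hg0 x, hgB x⟩)
  have hlevel : ∀ κ : Measure ℝ, [IsFiniteMeasure κ] → Antitone fun t => κ.real {x | t ≤ g x} :=
    fun κ _ _ _ hst => measureReal_mono fun _ hx => hst.trans hx
  -- layer cake: both integrals are integrals over `t ∈ (0, B]` of the masses of `{t ≤ g}`
  rw [(hint μ).integral_eq_integral_Ioc_meas_le (.of_forall hg0) (.of_forall hgB),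
    (hint ν).integral_eq_integral_Ioc_meas_le (.of_forall hg0) (.of_forall hgB),
    ← intervalIntegral.integral_of_le hB, ← intervalIntegral.integral_of_le hB,
    ← intervalIntegral.integral_sub (hlevel μ).intervalIntegrable (hlevel ν).intervalIntegrable]
  calc _ ≤ ∫ _ in 0..B, s₀ :=
        intervalIntegral.integral_mono_on hB
          ((hlevel μ).intervalIntegrable.sub (hlevel ν).intervalIntegrable) intervalIntegrable_const
          fun t _ => hS _ fun _ _ hxy hx => hx.trans (hg hxy)
    _ = B * s₀ := by simp

theorem integral_sub_integral_le_of_boundedVariationOn {μ ν : Measure ℝ} [IsProbabilityMeasure μ]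
    [IsProbabilityMeasure ν] {a s₀ : ℝ} (hμ : ∀ᵐ x ∂μ, a ≤ x) (hν : ∀ᵐ x ∂ν, a ≤ x)
    (hS : ∀ S : Set ℝ, IsUpperSet S → |μ.real S - ν.real S| ≤ s₀) {h : ℝ → ℝ}
    (hbv : BoundedVariationOn h (Ici a)) :
    ∫ x, h x ∂μ - ∫ x, h x ∂ν ≤ (eVariationOn h (Ici a)).toReal * s₀ := by
  obtain ⟨P, N, hP, hN, hP0, hN0, hPN, hdecomp⟩ := hbv.exists_monotone_decomposition
  set V := (eVariationOn h (Ici a)).toReal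
  have hs₀ : 0 ≤ s₀ := by simpa using hS ∅ isUpperSet_empty
  have hbddP : BddAbove (range P) := ⟨V - N 0, by rintro _ ⟨x, rfl⟩; linarith [hPN x 0]⟩
  have hbddN : BddAbove (range N) := ⟨V - P 0, by rintro _ ⟨y, rfl⟩; linarith [hPN 0 y]⟩
  have hsup : (⨆ x, P x) + ⨆ y, N y ≤ V := by
    have : ∀ x, P x ≤ V - ⨆ y, N y := fun x => by
      linarith [ciSup_le fun y => show N y ≤ V - P x by linarith [hPN x y]]
    linarith [ciSup_le this]
  have hsplit : ∀ κ : Measure ℝ, [IsProbabilityMeasure κ] → (∀ᵐ x ∂κ, a ≤ x) →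
      ∫ x, h x ∂κ = h a + ∫ x, P x ∂κ - ∫ x, N x ∂κ := fun κ _ hκ => by
    have hPint : Integrable P κ := .of_mem_Icc 0 (⨆ x, P x) hP.measurable.aemeasurable
      (.of_forall fun x => ⟨hP0 x, le_ciSup hbddP x⟩)
    have hNint : Integrable N κ := .of_mem_Icc 0 (⨆ y, N y) hN.measurable.aemeasurable
      (.of_forall fun y => ⟨hN0 y, le_ciSup hbddN y⟩)
    calc ∫ x, h x ∂κ = ∫ x, (h a + P x - N x) ∂κ :=
          integral_congr_ae (hκ.mono fun x hx => hdecomp hx)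
      _ = h a + ∫ x, P x ∂κ - ∫ x, N x ∂κ := by
        have hconstP : Integrable (fun x => h a + P x) κ := (integrable_const _).add hPint
        rw [integral_sub hconstP hNint, integral_add (integrable_const _) hPint]
        simp
  have hPcomp := integral_sub_integral_le_of_monotone (μ := μ) (ν := ν)
    (fun S hS' => (abs_le.1 (hS S hS')).2) hP hP0 (le_ciSup hbddP)
  have hNcomp := integral_sub_integral_le_of_monotone (μ := ν) (ν := μ) (s₀ := s₀)
    (fun S hS' => by linarith [(abs_le.1 (hS S hS')).1]) hN hN0 (le_ciSup hbddN)
  rw [hsplit μ hμ, hsplit ν hν]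
  linarith [mul_le_mul_of_nonneg_right hsup hs₀]

theorem integral_le_Pval_and_Pval_le {μb μa μ₀ : Measure ℝ} {h : ℝ → ℝ} {c : ℝ}
    (hμ₀ : IsP1 μ₀) (hbμ₀ : CvxOrder μb μ₀) (hμ₀a : CvxOrder μ₀ μa)
    (hc : ∀ μ, IsP1 μ → CvxOrder μb μ → CvxOrder μ μa → ∫ x, h x ∂μ ≤ c) :
    ∫ x, h x ∂μ₀ ≤ Pval μb μa h ∧ Pval μb μa h ≤ c := by
  have hub : ∀ r ∈ {r : ℝ | ∃ μ : Measure ℝ, IsP1 μ ∧ CvxOrder μb μ ∧ CvxOrder μ μa ∧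
      r = ∫ x, h x ∂μ}, r ≤ c := by
    rintro _ ⟨μ, hμ, hbμ, hμa, rfl⟩
    exact hc μ hμ hbμ hμa
  exact ⟨le_csSup ⟨c, hub⟩ ⟨μ₀, hμ₀, hbμ₀, hμ₀a, rfl⟩,
    csSup_le ⟨_, μ₀, hμ₀, hbμ₀, hμ₀a, rfl⟩ hub⟩

theorem bamot_sqrt_rate_general (μb μa : Measure ℝ) (hb : IsP1 μb) (ha : IsP1 μa)
    (hord : CvxOrder μb μa) (M : ℝ) (hM : 0 < M)
    (φm : ℝ → ℝ≥0∞)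
    (hφbd : ∀ x, φm x ≤ ENNReal.ofReal M)
    (hdens : (2:ℝ≥0)⁻¹ • μb + (2:ℝ≥0)⁻¹ • μa = volume.withDensity φm)
    (h : ℝ → ℝ)
    (hbv : BoundedVariationOn h (Ici (0:ℝ))) :
    0 ≤ Pval μb μa h - ∫ x, h x ∂((2:ℝ≥0)⁻¹ • μb + (2:ℝ≥0)⁻¹ • μa) ∧
    Pval μb μa h - ∫ x, h x ∂((2:ℝ≥0)⁻¹ • μb + (2:ℝ≥0)⁻¹ • μa)
      ≤ Real.sqrt (2 * M) * (eVariationOn h (Ici (0:ℝ))).toReal *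
          Real.sqrt (baDist μb μa) := by
  change 0 ≤ Pval μb μa h - ∫ x, h x ∂(midMeasure μb μa) ∧
    Pval μb μa h - ∫ x, h x ∂(midMeasure μb μa) ≤ _
  set V := (eVariationOn h (Ici (0:ℝ))).toReal
  have hm := isP1_midMeasure hb ha
  have hm_lip : ∀ s u, s ≤ u → (midMeasure μb μa).real (Icc s u) ≤ M * (u - s) :=
    fun s u hsu => by
      rw [midMeasure, hdens]
      exact measureReal_Icc_le_of_density_le hM.le hφbd hsu
  have hadmissible : ∀ μ, IsP1 μ → CvxOrder μb μ → CvxOrder μ μa →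
      ∫ x, h x ∂μ ≤ ∫ x, h x ∂(midMeasure μb μa) + V * √(2 * M * baDist μb μa) := by
    intro μ hμ hbμ hμa
    have := hμ.1; have := hm.1
    have hcalls := abs_callPrice_sub_midMeasure_le hb ha hord hbμ hμa
    linarith [integral_sub_integral_le_of_boundedVariationOn hμ.2.1 hm.2.1
      (fun _ => abs_measureReal_sub_le_of_isUpperSet hμ hm hM hm_lip hcalls) hbv]
  obtain ⟨hlow, hup⟩ := integral_le_Pval_and_Pval_le hm (cvxOrder_midMeasure_left hb ha hord)
    (cvxOrder_midMeasure_right hb ha hord) hadmissible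
  have hsqrt : V * √(2 * M * baDist μb μa) = √(2 * M) * V * √(baDist μb μa) := by
    rw [Real.sqrt_mul (by positivity)]; ring
  exact ⟨by linarith, by linarith⟩

/-- square-root convergence rate for bounded-variation payoffs. -/
theorem bamot_sqrt_rate (μb μa : Measure ℝ) (hb : IsP1 μb) (ha : IsP1 μa)
    (hord : CvxOrder μb μa) (M : ℝ) (hM : 0 < M)
    (φm : ℝ → ℝ≥0∞) (hφmeas : Measurable φm)
    (hφbd : ∀ x, φm x ≤ ENNReal.ofReal M)
    (hdens : (2:ℝ≥0)⁻¹ • μb + (2:ℝ≥0)⁻¹ • μa = volume.withDensity φm)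
    (h : ℝ → ℝ) (husc : UpperSemicontinuousOn h (Ici (0:ℝ))) (hg : LinGrowth h)
    (hbv : BoundedVariationOn h (Ici (0:ℝ))) :
    0 ≤ Pval μb μa h - ∫ x, h x ∂((2:ℝ≥0)⁻¹ • μb + (2:ℝ≥0)⁻¹ • μa) ∧
    Pval μb μa h - ∫ x, h x ∂((2:ℝ≥0)⁻¹ • μb + (2:ℝ≥0)⁻¹ • μa)
      ≤ Real.sqrt (2 * M) * (eVariationOn h (Ici (0:ℝ))).toReal *
          Real.sqrt (baDist μb μa) :=
  bamot_sqrt_rate_general μb μa hb ha hord M hM φm hφbd hdens h hbv
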